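/- Let s, t be coprime integers greater than 1. If a partition λ satisfies w_s(λ) < t or w_t(λ) < s, then λ is (s,t)-minimal, i.e. no partition of smaller size has the same s-core and t-core as λ. -/

import Mathlib

/-- A partition, given as a weakly decreasing finitely-supported sequence of
natural numbers (`parts 0` is the first part). -/
structure PartitionSeq where
  parts : ℕ →₀ ℕ
  antitone : ∀ ⦃i j : ℕ⦄, i ≤ j → parts j ≤ parts i

namespace PartitionSeq

/-- The size `|λ|` of a partition. -/
def size (l : PartitionSeq) : ℕ := l.parts.sum fun _ v => v

/-- The beta-set `β(λ) = { λ_r − r : r ≥ 1 }` (here 0-indexed). -/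
def betaSet (l : PartitionSeq) : Set ℤ :=
  Set.range fun r : ℕ => (l.parts r : ℤ) - (r + 1)

/-- `RemoveHook h l m` : `m` is obtained from `l` by removing a rim `h`-hook;
in beta-set terms, an element `b` of `β(l)` is replaced by `b − h ∉ β(l)`. -/
def RemoveHook (h : ℕ) (l m : PartitionSeq) : Prop :=
  ∃ b : ℤ, b ∈ l.betaSet ∧ b - (h : ℤ) ∉ l.betaSet ∧
    m.betaSet = insert (b - (h : ℤ)) (l.betaSet \ {b})

/-- `l` is an `s`-core: no rim `s`-hook can be removed. -/
def IsCore (s : ℕ) (l : PartitionSeq) : Prop := ∀ m : PartitionSeq, ¬ RemoveHook s l m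

/-- `c` is the `s`-core of `l`: it is obtained from `l` by repeatedly removing
rim `s`-hooks, and is itself an `s`-core. -/
def HasCore (s : ℕ) (l c : PartitionSeq) : Prop :=
  Relation.ReflTransGen (RemoveHook s) l c ∧ IsCore s c

/-- `IsConj l m` : `m` is the conjugate partition of `l`. -/
def IsConj (l m : PartitionSeq) : Prop :=
  ∀ r : ℕ, m.parts r = Set.ncard {c : ℕ | r + 1 ≤ l.parts c}

end PartitionSeq

/-- The region `U_x = { x + as + bt : a, b > 0 }`. -/
def UpSet (s t : ℕ) (x : ℤ) : Set ℤ :=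
  {n : ℤ | ∃ a b : ℕ, 0 < a ∧ 0 < b ∧ n = x + (a : ℤ) * s + (b : ℤ) * t}

/-- The region `L_x = { x − as − bt : a, b ≥ 0 }`. -/
def LowSet (s t : ℕ) (x : ℤ) : Set ℤ :=
  {n : ℤ | ∃ a b : ℕ, n = x - (a : ℤ) * s - (b : ℤ) * t}

/-- `x` is a pinch-point for `l` : `L_x ⊆ β(l)` and `β(l) ∩ U_x = ∅`. -/
def PinchPoint (s t : ℕ) (x : ℤ) (l : PartitionSeq) : Prop :=
  LowSet s t x ⊆ l.betaSet ∧ l.betaSet ∩ UpSet s t x = ∅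

/-- The generator `w_i` of the affine symmetric group `W_s` in its level-`t`
action on `ℤ` : `n ↦ n + t` if `n ≡ (i−1)t − (s−1)(t−1)/2 (mod s)`,
`n ↦ n − t` if `n ≡ it − (s−1)(t−1)/2 (mod s)`, and `n ↦ n` otherwise. -/
def wgen (s t : ℕ) (i : ℤ) : ℤ → ℤ := fun n =>
  if (s : ℤ) ∣ (n + ((s : ℤ) - 1) * ((t : ℤ) - 1) / 2 - (i - 1) * t) then n + t
  else if (s : ℤ) ∣ (n + ((s : ℤ) - 1) * ((t : ℤ) - 1) / 2 - i * t) then n - t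
  else n

/-- The monoid of maps `ℤ → ℤ` generated by the `wgen s t i`.  Since each
generator is an involution, this is the image of the level-`t` action
of the affine symmetric group `W_s` on `ℤ`. -/
def WMon (s t : ℕ) : Submonoid (Function.End ℤ) :=
  Submonoid.closure {f | ∃ i : ℤ, f = wgen s t i}

/-- `l` is `(s,t)`-minimal: no partition of smaller size has the same
`s`-core and `t`-core. -/
def MinimalPart (s t : ℕ) (l : PartitionSeq) : Prop :=
  ∀ (m σ τ : PartitionSeq), PartitionSeq.HasCore s l σ → PartitionSeq.HasCore t l τ →
    PartitionSeq.HasCore s m σ → PartitionSeq.HasCore t m τ → l.size ≤ m.size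

/-!
Removing a rim `h`-hook replaces a beta-number `b` by `b - h`. So it lowers the size by `h` and
keeps the multiset of residues mod `h` of the beta-numbers above any level `-N` below which the
beta-set is full. The beta-set of an `h`-core is closed under `x ↦ x - h`, so in each residue
class its beta-numbers `≥ -N` form an initial segment, determined by how many there are. Hence all
`h`-cores of `λ` have the same size and `|λ| = |core_h λ| + h w_h(λ)`.

If `μ` has the same `s`- and `t`-cores as `λ` and `|μ| < |λ|`, then
`|λ| - |μ| = s (w_s λ - w_s μ) = t (w_t λ - w_t μ)`, so by coprimality `t` divides
`w_s λ - w_s μ > 0`, forcing `w_s λ ≥ t`.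
-/

theorem Nat.le_of_add_mul_eq_of_coprime {s t n m x y a a' b b' : ℕ} (hst : s.Coprime t)
    (ha : a < t) (hn : n = x + s * a) (hm : m = x + s * a') (hn' : n = y + t * b)
    (hm' : m = y + t * b') : n ≤ m := by
  by_contra! hmn
  have haa' : a' < a := Nat.lt_of_mul_lt_mul_left (a := s) (by omega)
  have hdvd : t ∣ s * (a - a') := ⟨b - b', by rw [Nat.mul_sub, Nat.mul_sub]; omega⟩
  have := Nat.le_of_dvd (by omega) (hst.symm.dvd_of_dvd_mul_left hdvd)
  omega

namespace PartitionSeq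

open Finset Relation

def beta (l : PartitionSeq) (r : ℕ) : ℤ := (l.parts r : ℤ) - (r + 1)

theorem betaSet_eq_range (l : PartitionSeq) : l.betaSet = Set.range l.beta := rfl

theorem beta_strictAnti (l : PartitionSeq) : StrictAnti l.beta :=
  strictAnti_nat_of_succ_lt fun n => by
    have := l.antitone (Nat.le_add_right n 1)
    simp only [beta]
    omega

def LengthLE (l : PartitionSeq) (N : ℕ) : Prop := ∀ r, N ≤ r → l.parts r = 0

theorem exists_lengthLE (l : PartitionSeq) : ∃ N, l.LengthLE N :=
  ⟨l.parts.support.sup id + 1, fun r hr => by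
    by_contra h
    have := Finset.le_sup (f := id) (Finsupp.mem_support_iff.2 h)
    simp only [id] at this
    omega⟩

/-- The beta-numbers `≥ -N`; for `l.LengthLE N` these are `l.beta 0, …, l.beta (N - 1)`. -/
def window (l : PartitionSeq) (N : ℕ) : Finset ℤ := (range N).image l.beta

theorem card_window (l : PartitionSeq) (N : ℕ) : (l.window N).card = N := by
  rw [window, card_image_of_injective _ l.beta_strictAnti.injective, card_range]

namespace LengthLE

variable {l : PartitionSeq} {N : ℕ}

theorem beta_eq (hN : l.LengthLE N) {r : ℕ} (hr : N ≤ r) : l.beta r = -r - 1 := by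
  simp only [beta, hN r hr]
  ring

theorem mem_betaSet (hN : l.LengthLE N) {x : ℤ} (hx : x < -N) : x ∈ l.betaSet :=
  ⟨(-x - 1).toNat, show l.beta _ = x by
    rw [hN.beta_eq (by omega)]
    omega⟩

theorem mem_window_iff (hN : l.LengthLE N) {x : ℤ} :
    x ∈ l.window N ↔ x ∈ l.betaSet ∧ -(N : ℤ) ≤ x := by
  simp only [window, mem_image, mem_range, betaSet_eq_range, Set.mem_range]
  constructor
  · rintro ⟨r, hr, rfl⟩
    refine ⟨⟨r, rfl⟩, ?_⟩
    have : (0 : ℤ) ≤ l.parts r := by positivity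
    simp only [beta]
    omega
  · rintro ⟨⟨r, rfl⟩, hx⟩
    refine ⟨r, ?_, rfl⟩
    by_contra hr
    rw [hN.beta_eq (by omega)] at hx
    omega

theorem betaSet_eq (hN : l.LengthLE N) :
    l.betaSet = ↑(l.window N) ∪ Set.Iio (-(N : ℤ)) := by
  ext x
  simp only [Set.mem_union, mem_coe, hN.mem_window_iff, Set.mem_Iio]
  by_cases hx : x < -N
  · simp [hx, hN.mem_betaSet hx]
  · simp only [hx, or_false]
    exact (and_iff_left (by omega)).symm

theorem size_eq (hN : l.LengthLE N) :
    (l.size : ℤ) = ∑ x ∈ l.window N, x + ∑ r ∈ range N, ((r : ℤ) + 1) := by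
  have hsupp : l.parts.support ⊆ range N := fun r hr => by
    rw [mem_range]
    by_contra hc
    exact Finsupp.mem_support_iff.1 hr (hN r (by omega))
  rw [size, Finsupp.sum_of_support_subset _ hsupp _ fun _ _ => rfl, window,
    sum_image fun _ _ _ _ h => l.beta_strictAnti.injective h, ← sum_add_distrib]
  push_cast
  refine sum_congr rfl fun r _ => ?_
  simp only [beta]
  ring

end LengthLE

theorem exists_beta_eq {e : ℕ → ℤ} (he : StrictAnti e) {N : ℕ}
    (htail : ∀ n, N ≤ n → e n = -n - 1) : ∃ p : PartitionSeq, p.beta = e := by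
  have hanti : Antitone fun n => e n + n + 1 :=
    antitone_nat_of_succ_le fun n => by
      have := he (Nat.lt_add_one n)
      push_cast
      omega
  have hnonneg : ∀ n, 0 ≤ e n + n + 1 := fun n => by
    have hle : e (max n N) + (max n N : ℕ) + 1 ≤ e n + n + 1 := hanti (le_max_left n N)
    rw [htail _ (le_max_right n N)] at hle
    omega
  let parts : ℕ →₀ ℕ := Finsupp.onFinset (range N) (fun n => (e n + n + 1).toNat) fun n hn => by
    rw [mem_range]
    by_contra hnN
    exact hn (Int.toNat_eq_zero.2 (by rw [htail n (by omega)]; omega))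
  refine ⟨⟨parts, fun i j hij => Int.toNat_le_toNat (hanti hij)⟩, funext fun n => ?_⟩
  have := hnonneg n
  simp only [beta, parts, Finsupp.onFinset_apply]
  omega

theorem exists_betaSet_eq {F : Finset ℤ} {N : ℕ} (hcard : F.card = N)
    (hge : ∀ x ∈ F, -(N : ℤ) ≤ x) : ∃ p : PartitionSeq, p.betaSet = ↑F ∪ Set.Iio (-(N : ℤ)) := by
  let f := F.orderEmbOfFin hcard
  let e : ℕ → ℤ := fun n => if h : n < N then f (Fin.rev ⟨n, h⟩) else -n - 1
  have he : StrictAnti e := strictAnti_nat_of_succ_lt fun n => by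
    by_cases h : n + 1 < N
    · simp only [e, dif_pos h, dif_pos (show n < N by omega)]
      exact f.strictMono (Fin.rev_lt_rev.2 (Fin.mk_lt_mk.2 n.lt_succ_self))
    · simp only [e, dif_neg h]
      split_ifs with hn
      · have : -(N : ℤ) ≤ f (Fin.rev ⟨n, hn⟩) := hge _ (F.orderEmbOfFin_mem hcard _)
        omega
      · omega
  obtain ⟨p, hp⟩ := exists_beta_eq he (N := N) fun n hn => by simp [e, not_lt.2 hn]
  refine ⟨p, ?_⟩
  rw [betaSet_eq_range, hp]
  ext x
  simp only [Set.mem_range, Set.mem_union, mem_coe, Set.mem_Iio]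
  constructor
  · rintro ⟨n, rfl⟩
    simp only [e]
    split_ifs with hn
    · exact Or.inl (F.orderEmbOfFin_mem hcard _)
    · exact Or.inr (by omega)
  · rintro (hx | hx)
    · obtain ⟨i, hi⟩ : x ∈ Set.range f := by rwa [Finset.range_orderEmbOfFin]
      refine ⟨i.rev, ?_⟩
      simp only [e, dif_pos i.rev.isLt, Fin.eta, Fin.rev_rev, hi]
    · refine ⟨(-x - 1).toNat, ?_⟩
      simp only [e, dif_neg (show ¬(-x - 1).toNat < N by omega)]
      omega

section

variable {p : PartitionSeq} {F : Finset ℤ} {N : ℕ}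

theorem lengthLE_of_betaSet_eq (hcard : F.card = N)
    (hp : p.betaSet = ↑F ∪ Set.Iio (-(N : ℤ))) : p.LengthLE N := by
  intro r hr
  by_contra hpr
  have hbeta : ∀ j ∈ range (r + 1), p.beta j ∈ Ico (-(r : ℤ)) (-(N : ℤ)) ∪ F := fun j hj => by
    have hjr : p.beta r ≤ p.beta j := p.beta_strictAnti.antitone (by simpa [Nat.lt_succ_iff] using hj)
    have hr' : -(r : ℤ) ≤ p.beta r := by
      simp only [beta]
      omega
    have hmem : p.beta j ∈ p.betaSet := ⟨j, rfl⟩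
    rw [hp] at hmem
    rcases hmem with hF | hlow
    · exact mem_union_right _ hF
    · exact mem_union_left _ (mem_Ico.2 ⟨by omega, hlow⟩)
  have hcard_le := card_le_card_of_injOn p.beta hbeta p.beta_strictAnti.injective.injOn
  have := card_union_le (Ico (-(r : ℤ)) (-(N : ℤ))) F
  rw [card_range] at hcard_le
  rw [Int.card_Ico] at this
  omega

theorem window_eq_of_betaSet_eq (hN : p.LengthLE N) (hge : ∀ x ∈ F, -(N : ℤ) ≤ x)
    (hp : p.betaSet = ↑F ∪ Set.Iio (-(N : ℤ))) : p.window N = F := by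
  ext x
  rw [hN.mem_window_iff, hp]
  simp only [Set.mem_union, mem_coe, Set.mem_Iio]
  constructor
  · rintro ⟨hx | hx, hxN⟩
    · exact hx
    · omega
  · exact fun hx => ⟨Or.inl hx, hge x hx⟩

end

section

variable {h N : ℕ} {l m c : PartitionSeq}

theorem LengthLE.insert_sub_diff_betaSet (hN : l.LengthLE N) {b : ℤ} (hb : b ∈ l.betaSet)
    (hbh : b - h ∉ l.betaSet) :
    (insert (b - h) ((l.window N).erase b)).card = N ∧
      (∀ x ∈ insert (b - h) ((l.window N).erase b), -(N : ℤ) ≤ x) ∧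
      insert (b - h) (l.betaSet \ {b}) =
        ↑(insert (b - h) ((l.window N).erase b)) ∪ Set.Iio (-(N : ℤ)) := by
  have hbhN : -(N : ℤ) ≤ b - h := by
    by_contra hlt
    exact hbh (hN.mem_betaSet (by omega))
  have hbW : b ∈ l.window N := hN.mem_window_iff.2 ⟨hb, by omega⟩
  have hbhW : b - h ∉ (l.window N).erase b := fun hc =>
    hbh (hN.mem_window_iff.1 (mem_of_mem_erase hc)).1
  refine ⟨?_, ?_, ?_⟩
  · rw [card_insert_of_notMem hbhW, card_erase_of_mem hbW, card_window]
    have := card_pos.2 ⟨b, hbW⟩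
    rw [card_window] at this
    omega
  · simp only [mem_insert, mem_erase]
    rintro x (rfl | ⟨-, hx⟩)
    exacts [hbhN, (hN.mem_window_iff.1 hx).2]
  · rw [hN.betaSet_eq]
    ext x
    simp only [Set.mem_insert_iff, Set.mem_sdiff, Set.mem_union, mem_coe, Set.mem_Iio,
      Set.mem_singleton_iff, coe_insert, coe_erase]
    constructor
    · rintro (rfl | ⟨hx | hx, hxb⟩)
      exacts [Or.inl (Or.inl rfl), Or.inl (Or.inr ⟨hx, hxb⟩), Or.inr hx]
    · rintro ((rfl | ⟨hx, hxb⟩) | hx)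
      · exact Or.inl rfl
      · exact Or.inr ⟨Or.inl hx, hxb⟩
      · exact Or.inr ⟨Or.inr hx, fun hxb => by subst hxb; exact hbhW (by omega)⟩

theorem RemoveHook.window_eq (hlm : RemoveHook h l m) (hN : l.LengthLE N) :
    ∃ b ∈ l.window N, b - h ∉ l.window N ∧ m.LengthLE N ∧
      m.window N = insert (b - h) ((l.window N).erase b) := by
  obtain ⟨b, hb, hbh, hm⟩ := hlm
  obtain ⟨hcard, hge, hset⟩ := hN.insert_sub_diff_betaSet hb hbh
  rw [hset] at hm
  have hmN := lengthLE_of_betaSet_eq hcard hm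
  refine ⟨b, ?_, fun hc => hbh (hN.mem_window_iff.1 hc).1, hmN,
    window_eq_of_betaSet_eq hmN hge hm⟩
  refine hN.mem_window_iff.2 ⟨hb, ?_⟩
  have := hge _ (mem_insert_self _ _)
  omega

theorem RemoveHook.size_eq (hlm : RemoveHook h l m) : l.size = m.size + h := by
  obtain ⟨N, hN⟩ := l.exists_lengthLE
  obtain ⟨b, hbW, hbhW, hmN, hm⟩ := hlm.window_eq hN
  have hsum : ∑ x ∈ m.window N, x = ∑ x ∈ l.window N, x - h := by
    rw [hm, sum_insert fun hc => hbhW (mem_of_mem_erase hc), sum_erase_eq_sub hbW]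
    ring
  have := hN.size_eq
  have := hmN.size_eq
  omega

def residues (h : ℕ) (F : Finset ℤ) : Multiset ℤ := F.val.map (· % (h : ℤ))

theorem RemoveHook.residues_window (hlm : RemoveHook h l m) (hN : l.LengthLE N) :
    residues h (m.window N) = residues h (l.window N) := by
  obtain ⟨b, hbW, hbhW, -, hm⟩ := hlm.window_eq hN
  have hres : (b - h) % (h : ℤ) = b % h := by simp
  rw [residues, residues, hm, insert_val_of_notMem fun hc => hbhW (mem_of_mem_erase hc),
    erase_val, Multiset.map_cons, hres]
  conv_rhs => rw [← Multiset.cons_erase (s := (l.window N).val) hbW, Multiset.map_cons]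

end

section

variable {h N : ℕ} {l c c₁ c₂ : PartitionSeq}

theorem lengthLE_of_reflTransGen (hlc : ReflTransGen (RemoveHook h) l c) (hN : l.LengthLE N) :
    c.LengthLE N := by
  induction hlc with
  | refl => exact hN
  | tail _ hbc ih =>
    obtain ⟨-, -, -, hcN, -⟩ := hbc.window_eq ih
    exact hcN

theorem exists_size_eq_of_reflTransGen (hlc : ReflTransGen (RemoveHook h) l c) :
    ∃ k, l.size = c.size + h * k := by
  induction hlc with
  | refl => exact ⟨0, rfl⟩
  | tail _ hbc ih =>
    obtain ⟨k, hk⟩ := ih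
    exact ⟨k + 1, by rw [hk, hbc.size_eq]; ring⟩

theorem residues_window_of_reflTransGen (hlc : ReflTransGen (RemoveHook h) l c)
    (hN : l.LengthLE N) : residues h (c.window N) = residues h (l.window N) := by
  induction hlc with
  | refl => rfl
  | tail hab hbc ih => rw [hbc.residues_window (lengthLE_of_reflTransGen hab hN), ih]

theorem IsCore.sub_mem (hc : IsCore h c) {b : ℤ} (hb : b ∈ c.betaSet) : b - h ∈ c.betaSet := by
  by_contra hbh
  obtain ⟨N, hN⟩ := c.exists_lengthLE
  obtain ⟨hcard, hge, hset⟩ := hN.insert_sub_diff_betaSet hb hbh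
  obtain ⟨p, hp⟩ := exists_betaSet_eq hcard hge
  exact hc p ⟨b, hb, hbh, hset ▸ hp⟩

theorem IsCore.mem_of_modEq_of_le (hc : IsCore h c) {x y : ℤ} (hx : x ∈ c.betaSet)
    (hmod : y ≡ x [ZMOD h]) (hyx : y ≤ x) : y ∈ c.betaSet := by
  have hsub : ∀ n : ℕ, x - h * n ∈ c.betaSet := fun n => by
    induction n with
    | zero => simpa using hx
    | succ n ih => simpa [mul_add, sub_add_eq_sub_sub] using hc.sub_mem ih
  obtain ⟨k, hk⟩ := hmod.dvd
  rcases le_or_gt 0 k with hk0 | hk0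
  · simpa [Int.toNat_of_nonneg hk0, ← hk] using hsub k.toNat
  · have : (h : ℤ) * k ≤ 0 := mul_nonpos_of_nonneg_of_nonpos (by positivity) hk0.le
    obtain rfl : y = x := by linarith
    exact hx

theorem window_subset_of_isCore (hc₁ : IsCore h c₁) (hc₂ : IsCore h c₂) (hN₁ : c₁.LengthLE N)
    (hN₂ : c₂.LengthLE N) (hres : residues h (c₁.window N) = residues h (c₂.window N)) :
    c₁.window N ⊆ c₂.window N := by
  intro x hx₁
  by_contra hx₂
  have hcount : ∀ F : Finset ℤ,
      #(F.filter (x ≡ · [ZMOD h])) = (residues h F).count (x % h) := fun F => by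
    rw [residues, Multiset.count_map]
    rfl
  -- within the residue class of `x`, both windows are initial segments, so they are nested
  have hsub : (c₂.window N).filter (x ≡ · [ZMOD h]) ⊂ (c₁.window N).filter (x ≡ · [ZMOD h]) := by
    refine ssubset_of_subset_of_ne (fun y hy => ?_) fun heq => hx₂ ?_
    · rw [mem_filter] at hy ⊢
      obtain ⟨hy₂, hxy⟩ := hy
      rw [hN₂.mem_window_iff] at hy₂ hx₂
      rw [hN₁.mem_window_iff] at hx₁ ⊢
      refine ⟨⟨?_, hy₂.2⟩, hxy⟩
      rcases le_or_gt y x with hyx | hxy'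
      · exact hc₁.mem_of_modEq_of_le hx₁.1 hxy.symm hyx
      · exact absurd ⟨hc₂.mem_of_modEq_of_le hy₂.1 hxy hxy'.le, hx₁.2⟩ hx₂
    · exact (mem_filter.1 (heq ▸ mem_filter.2 ⟨hx₁, Int.ModEq.refl x⟩)).1
  have := card_lt_card hsub
  rw [hcount, hcount, hres] at this
  exact lt_irrefl _ this

theorem HasCore.size_eq (hc₁ : HasCore h l c₁) (hc₂ : HasCore h l c₂) : c₁.size = c₂.size := by
  obtain ⟨N, hN⟩ := l.exists_lengthLE
  have hN₁ := lengthLE_of_reflTransGen hc₁.1 hN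
  have hN₂ := lengthLE_of_reflTransGen hc₂.1 hN
  have hres : residues h (c₁.window N) = residues h (c₂.window N) := by
    rw [residues_window_of_reflTransGen hc₁.1 hN, residues_window_of_reflTransGen hc₂.1 hN]
  have hwin : c₁.window N = c₂.window N :=
    (window_subset_of_isCore hc₁.2 hc₂.2 hN₁ hN₂ hres).antisymm
      (window_subset_of_isCore hc₂.2 hc₁.2 hN₂ hN₁ hres.symm)
  have := hN₁.size_eq
  have := hN₂.size_eq
  rw [hwin] at *
  omega

end

theorem size_le_of_size_lt_core_add {s t : ℕ} (hst : s.Coprime t)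
    {l μ σ τ c : PartitionSeq} (hc : HasCore s l c) (hsz : l.size < c.size + s * t)
    (hlσ : HasCore s l σ) (hlτ : HasCore t l τ) (hμσ : HasCore s μ σ) (hμτ : HasCore t μ τ) :
    l.size ≤ μ.size := by
  obtain ⟨a, ha⟩ := exists_size_eq_of_reflTransGen hlσ.1
  obtain ⟨a', ha'⟩ := exists_size_eq_of_reflTransGen hμσ.1
  obtain ⟨b, hb⟩ := exists_size_eq_of_reflTransGen hlτ.1
  obtain ⟨b', hb'⟩ := exists_size_eq_of_reflTransGen hμτ.1
  have hat : a < t := by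
    rw [hc.size_eq hlσ, ha] at hsz
    exact Nat.lt_of_mul_lt_mul_left (a := s) (by omega)
  exact Nat.le_of_add_mul_eq_of_coprime hst hat ha ha' hb hb'

end PartitionSeq

theorem stmt9_general (s t : ℕ) (hst : Nat.Coprime s t)
    (l : PartitionSeq)
    (hw : (∃ c : PartitionSeq, PartitionSeq.HasCore s l c ∧ l.size < c.size + s * t) ∨
          (∃ c : PartitionSeq, PartitionSeq.HasCore t l c ∧ l.size < c.size + t * s)) :
    ∀ (μ σ τ : PartitionSeq), PartitionSeq.HasCore s l σ → PartitionSeq.HasCore t l τ →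
      PartitionSeq.HasCore s μ σ → PartitionSeq.HasCore t μ τ → l.size ≤ μ.size := by
  intro μ σ τ hlσ hlτ hμσ hμτ
  rcases hw with ⟨c, hc, hsz⟩ | ⟨c, hc, hsz⟩
  · exact PartitionSeq.size_le_of_size_lt_core_add hst hc hsz hlσ hlτ hμσ hμτ
  · exact PartitionSeq.size_le_of_size_lt_core_add hst.symm hc hsz hlτ hlσ hμτ hμσ

/-- a partition with `s`-weight `< t` or `t`-weight `< s` is
`(s,t)`-minimal. -/
theorem stmt9 (s t : ℕ) (hs : 1 < s) (ht : 1 < t) (hst : Nat.Coprime s t)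
    (l : PartitionSeq)
    (hw : (∃ c : PartitionSeq, PartitionSeq.HasCore s l c ∧ l.size < c.size + s * t) ∨
          (∃ c : PartitionSeq, PartitionSeq.HasCore t l c ∧ l.size < c.size + t * s)) :
    ∀ (μ σ τ : PartitionSeq), PartitionSeq.HasCore s l σ → PartitionSeq.HasCore t l τ →
      PartitionSeq.HasCore s μ σ → PartitionSeq.HasCore t μ τ → l.size ≤ μ.size :=
  stmt9_general s t hst l hw
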